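/- arXiv:2405.06935 — 2 statements merged into one kernel-verified Lean document; each statement's English description precedes it below -/
import Mathlib

section
/- Let p be an odd prime, n ≥ 2, and A = F_p[y₁,…,y_n] ⊗ Λ(x₁,…,x_n). For each j ≥ 0 let Q_j be the graded derivation with Q_j(x_i) = y_i^{p^j} and Q_j(y_i) = 0. Then for any s with 2 ≤ s ≤ n and any indices 0 < i₁ < ⋯ < i_{s−2}, the element Q_{i₁} ∘ ⋯ ∘ Q_{i_{s−2}} ∘ Q₀ (x₁ x₂ ⋯ x_s) is nonzero; indeed it contains the monomial term ± y₁^{p^{i₁}} ⋯ y_{s−2}^{p^{i_{s−2}}} · y_{s−1} · x_s with coefficient ±1. -/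
/-!
Expanding `Q_{i₁} ⋯ Q_{i_{s-2}} Q₀ (x₁ ⋯ x_s)` by the Leibniz rule, each operator `Q_j`
hits a different `xᵥ` and turns it into `yᵥ^{p^j}`. Since the exponents `p^j` are distinct,
exactly one term of the `x_s`-component carries the monomial
`y₁^{p^{i₁}} ⋯ y_{s-2}^{p^{i_{s-2}}} y_{s-1}`, and it has coefficient `±1`. For an induction,
move `x_{s-1}` to the front and peel the variables off in order of increasing exponent: if an
operator `Q_j` other than the intended one hits the current variable `xᵥ`, then `p^j` exceeds
the exponent of `yᵥ` in the target monomial.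
-/

open TensorProduct

/-- `A = F_p[y₁,…,yₙ] ⊗ Λ(x₁,…,xₙ)`, the mod-p cohomology of `B(ℤ/p)ⁿ` (p odd). -/
noncomputable abbrev PolyTensorExtN (p n : ℕ) :=
  TensorProduct (ZMod p) (MvPolynomial (Fin n) (ZMod p))
    (ExteriorAlgebra (ZMod p) (Fin n → ZMod p))

theorem ExteriorAlgebra.ιInv_ι_mul {R M : Type*} [CommRing R] [AddCommGroup M] [Module R M]
    (m : M) (ω : ExteriorAlgebra R M) : ιInv (ι R m * ω) = algebraMapInv ω • m := by
  let : Module Rᵐᵒᵖ M := Module.compHom _ ((RingHom.id R).fromOpposite mul_comm)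
  have : IsCentralScalar R M := ⟨fun r m => rfl⟩
  have hfst : (TrivSqZeroExt.fstHom R R M).comp toTrivSqZeroExt = algebraMapInv :=
    hom_ext (LinearMap.ext fun m => by simp [toTrivSqZeroExt_ι, algebraMapInv])
  have := congrArg (· ω) hfst
  simp only [AlgHom.comp_apply, TrivSqZeroExt.fstHom_apply] at this
  simp [ιInv, toTrivSqZeroExt_ι, TrivSqZeroExt.snd_mul, this]

theorem List.prod_mul_eq_smul_mul_prod_of_anticomm {R A : Type*} [CommRing R] [Ring A]
    [Algebra R A] (a : A) (l : List A) (h : ∀ b ∈ l, b * a = -(a * b)) :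
    l.prod * a = (-1 : R) ^ l.length • (a * l.prod) := by
  induction l with
  | nil => simp
  | cons b l ih =>
    rw [List.prod_cons, mul_assoc, ih fun c hc => h c (List.mem_cons_of_mem b hc),
      mul_smul_comm, ← mul_assoc, h b List.mem_cons_self, List.length_cons, pow_succ,
      mul_neg_one, neg_smul, neg_mul, smul_neg, mul_assoc]

namespace MilnorOperation

open MvPolynomial

variable {p n : ℕ}

noncomputable def xGen (i : Fin n) : PolyTensorExtN p n :=
  1 ⊗ₜ ExteriorAlgebra.ι (ZMod p) (Pi.single i 1)

variable (p n) in
noncomputable def parity : PolyTensorExtN p n →ₐ[ZMod p] PolyTensorExtN p n :=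
  Algebra.TensorProduct.map (AlgHom.id (ZMod p) (MvPolynomial (Fin n) (ZMod p)))
    (ExteriorAlgebra.map (-(LinearMap.id (R := ZMod p) (M := Fin n → ZMod p))))

lemma parity_tmul_one (f : MvPolynomial (Fin n) (ZMod p)) :
    parity p n (f ⊗ₜ 1) = f ⊗ₜ 1 := by
  simp [parity]

lemma parity_xGen (i : Fin n) : parity p n (xGen i) = -xGen i := by
  simp [parity, xGen, TensorProduct.tmul_neg]

lemma xGen_mul_xGen_comm (i j : Fin n) :
    (xGen i * xGen j : PolyTensorExtN p n) = -(xGen j * xGen i) := by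
  simp only [xGen, Algebra.TensorProduct.tmul_mul_tmul, one_mul, ← TensorProduct.tmul_neg]
  congr 1
  rw [eq_neg_iff_add_eq_zero, ExteriorAlgebra.ι_add_mul_swap]

lemma list_prod_map_xGen_append_pair (l : List (Fin n)) (c w : Fin n) :
    ((l ++ [c, w]).map (xGen (p := p))).prod =
      (-1 : ZMod p) ^ l.length • ((c :: l ++ [w]).map xGen).prod := by
  have hanti (b : PolyTensorExtN p n) (hb : b ∈ l.map xGen) : b * xGen c = -(xGen c * b) := by
    obtain ⟨v, -, rfl⟩ := List.mem_map.mp hb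
    exact xGen_mul_xGen_comm v c
  simp only [List.map_append, List.map_cons, List.map_nil, List.prod_append, List.prod_cons,
    List.prod_nil, mul_one, ← mul_assoc,
    List.prod_mul_eq_smul_mul_prod_of_anticomm (R := ZMod p) _ _ hanti, List.length_map,
    smul_mul_assoc]

variable (p) in
/-- The coefficient of `y^μ x_w`. -/
noncomputable def xCoeff (μ : Fin n →₀ ℕ) (w : Fin n) :
    PolyTensorExtN p n →ₗ[ZMod p] ZMod p :=
  lcoeff (ZMod p) μ ∘ₗ
    (TensorProduct.rid (ZMod p) (MvPolynomial (Fin n) (ZMod p))).toLinearMap ∘ₗ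
    TensorProduct.map LinearMap.id (LinearMap.proj w) ∘ₗ
    TensorProduct.map LinearMap.id ExteriorAlgebra.ιInv

lemma xCoeff_tmul (μ : Fin n →₀ ℕ) (w : Fin n) (f : MvPolynomial (Fin n) (ZMod p))
    (ω : ExteriorAlgebra (ZMod p) (Fin n → ZMod p)) :
    xCoeff p μ w (f ⊗ₜ ω) = ExteriorAlgebra.ιInv ω w * coeff μ f := by
  simp [xCoeff]

lemma xCoeff_xGen (w : Fin n) : xCoeff p 0 w (xGen w) = 1 := by
  simp [xGen, xCoeff_tmul, ExteriorAlgebra.ι_leftInverse _]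

lemma xCoeff_xGen_mul (μ : Fin n →₀ ℕ) {v w : Fin n} (hvw : v ≠ w)
    (b : PolyTensorExtN p n) :
    xCoeff p μ w (xGen v * b) = 0 := by
  induction b using TensorProduct.induction_on with
  | zero => rw [mul_zero, map_zero]
  | tmul f ω =>
    rw [xGen, Algebra.TensorProduct.tmul_mul_tmul, one_mul, xCoeff_tmul,
      ExteriorAlgebra.ιInv_ι_mul, Pi.smul_apply, Pi.single_eq_of_ne' hvw, smul_zero, zero_mul]
  | add a b ha hb => rw [mul_add, map_add, ha, hb, add_zero]

lemma xCoeff_monomial_mul (μ : Fin n →₀ ℕ) (w : Fin n) (d : Fin n →₀ ℕ)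
    (b : PolyTensorExtN p n) :
    xCoeff p μ w ((monomial d 1 ⊗ₜ 1) * b) =
      if d ≤ μ then xCoeff p (μ - d) w b else 0 := by
  induction b using TensorProduct.induction_on with
  | zero => simp
  | tmul f ω =>
    rw [Algebra.TensorProduct.tmul_mul_tmul, one_mul, xCoeff_tmul, xCoeff_tmul,
      coeff_monomial_mul']
    split_ifs <;> simp
  | add a b ha hb => rw [mul_add, map_add, ha, hb]; split_ifs <;> simp

variable (p) in
noncomputable def pairedExponent {σ : Type*} (e : σ → ℕ) (l : List σ) : σ →₀ ℕ :=
  (l.map fun v => Finsupp.single v (p ^ e v)).sum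

lemma pairedExponent_cons {σ : Type*} (e : σ → ℕ) (v : σ) (l : List σ) :
    pairedExponent p e (v :: l) = Finsupp.single v (p ^ e v) + pairedExponent p e l := by
  simp [pairedExponent]

lemma pairedExponent_apply_of_not_mem {σ : Type*} (e : σ → ℕ) {v : σ} {l : List σ}
    (hv : v ∉ l) : pairedExponent p e l v = 0 := by
  induction l with
  | nil => simp [pairedExponent]
  | cons u l ih =>
    rw [List.mem_cons, not_or] at hv
    rw [pairedExponent_cons, Finsupp.add_apply, ih hv.2, Finsupp.single_eq_of_ne hv.1, add_zero]

lemma not_single_le_pairedExponent_cons (hp : 1 < p) {σ : Type*} {e : σ → ℕ} {v : σ}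
    {l : List σ} (hl : (v :: l).Pairwise (e · < e ·)) {j : ℕ} (hj : j ∈ l.map e) :
    ¬ Finsupp.single v (p ^ j) ≤ pairedExponent p e (v :: l) := by
  rw [List.pairwise_cons] at hl
  obtain ⟨u, hu, rfl⟩ := List.mem_map.mp hj
  have hvl : v ∉ l := fun h => lt_irrefl _ (hl.1 v h)
  rw [Finsupp.single_le_iff, pairedExponent_cons, Finsupp.add_apply,
    pairedExponent_apply_of_not_mem e hvl, Finsupp.single_eq_same, add_zero, not_le]
  exact Nat.pow_lt_pow_right hp (hl.1 u hu)

structure IsMilnorFamily (Q : ℕ → PolyTensorExtN p n →ₗ[ZMod p] PolyTensorExtN p n) :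
    Prop where
  map_xGen : ∀ j i, Q j (xGen i) = (X i ^ p ^ j) ⊗ₜ 1
  map_X_tmul_one : ∀ j i, Q j (X i ⊗ₜ 1) = 0
  map_mul : ∀ j a b, Q j (a * b) = Q j a * b + parity p n a * Q j b

namespace IsMilnorFamily

variable {Q : ℕ → PolyTensorExtN p n →ₗ[ZMod p] PolyTensorExtN p n}

lemma map_one (hQ : IsMilnorFamily Q) (j : ℕ) : Q j 1 = 0 := by
  simpa using hQ.map_mul j 1 1

lemma map_tmul_one (hQ : IsMilnorFamily Q) (j : ℕ) (f : MvPolynomial (Fin n) (ZMod p)) :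
    Q j (f ⊗ₜ 1) = 0 := by
  induction f using MvPolynomial.induction_on with
  | C a =>
    rw [← mul_one (C a), ← smul_eq_C_mul, ← TensorProduct.smul_tmul', map_smul,
      ← Algebra.TensorProduct.one_def, hQ.map_one, smul_zero]
  | add f g hf hg => rw [TensorProduct.add_tmul, map_add, hf, hg, add_zero]
  | mul_X f i hf =>
    rw [← one_mul (1 : ExteriorAlgebra (ZMod p) _), ← Algebra.TensorProduct.tmul_mul_tmul,
      hQ.map_mul, hf, hQ.map_X_tmul_one, zero_mul, mul_zero, add_zero]

lemma map_tmul_one_mul (hQ : IsMilnorFamily Q) (j : ℕ) (f : MvPolynomial (Fin n) (ZMod p))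
    (b : PolyTensorExtN p n) : Q j ((f ⊗ₜ 1) * b) = (f ⊗ₜ 1) * Q j b := by
  rw [hQ.map_mul, hQ.map_tmul_one, zero_mul, zero_add, parity_tmul_one]

lemma map_xGen_mul (hQ : IsMilnorFamily Q) (j : ℕ) (v : Fin n) (b : PolyTensorExtN p n) :
    Q j (xGen v * b) = ((X v ^ p ^ j) ⊗ₜ 1) * b - xGen v * Q j b := by
  rw [hQ.map_mul, hQ.map_xGen, parity_xGen, sub_eq_add_neg]
  exact congrArg _ (neg_mul (xGen v : PolyTensorExtN p n) (Q j b))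

/-- `xᵥ` is hit by at most one of the operators, since `Q_j xᵥ` is a polynomial. -/
lemma list_prod_map_apply_xGen_mul (hQ : IsMilnorFamily Q) (js : List ℕ) (v : Fin n)
    (b : PolyTensorExtN p n) :
    (js.map Q).prod (xGen v * b) =
      ∑ t : Fin js.length, (-1 : ZMod p) ^ (js.length - (t + 1)) •
          (((X v ^ p ^ js[t]) ⊗ₜ 1) * ((js.eraseIdx t).map Q).prod b) +
        (-1 : ZMod p) ^ js.length • (xGen v * (js.map Q).prod b) := by
  induction js with
  | nil => simp
  | cons j js ih =>
    simp only [List.map_cons, List.prod_cons, Module.End.mul_apply, ih, map_add, map_sum,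
      map_smul, hQ.map_tmul_one_mul, hQ.map_xGen_mul, List.length_cons, Fin.sum_univ_succ]
    simp only [Fin.val_zero, Fin.getElem_fin, List.getElem_cons_zero, List.eraseIdx_cons_zero,
      Fin.val_succ, List.getElem_cons_succ, List.eraseIdx_cons_succ, List.map_cons,
      List.prod_cons, Module.End.mul_apply, smul_sub, pow_succ', mul_smul, neg_one_smul]
    simp only [Nat.add_sub_add_right, zero_add, Nat.add_sub_cancel]
    abel

theorem xCoeff_list_prod_map_apply (hp : 1 < p) (hQ : IsMilnorFamily Q) (e : Fin n → ℕ)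
    (w : Fin n) (l : List (Fin n)) (hl : l.Pairwise (e · < e ·)) (hw : w ∉ l) (js : List ℕ)
    (hjs : js.Perm (l.map e)) :
    ∃ k : ℕ, xCoeff p (pairedExponent p e l) w ((js.map Q).prod ((l ++ [w]).map xGen).prod) =
      (-1) ^ k := by
  induction l generalizing js with
  | nil =>
    obtain rfl := List.perm_nil.mp hjs
    exact ⟨0, by simp [pairedExponent, xCoeff_xGen]⟩
  | cons v l ih =>
    rw [List.mem_cons, not_or] at hw
    obtain ⟨t₀, ht₀, hjt₀⟩ := List.getElem_of_mem (hjs.mem_iff.mpr List.mem_cons_self)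
    have hrest : (js.eraseIdx t₀).Perm (l.map e) := by
      simpa [hjt₀] using (List.erase_getElem ht₀).symm.trans (hjs.erase js[t₀])
    obtain ⟨k, hk⟩ := ih (List.pairwise_cons.mp hl).2 hw.2 _ hrest
    have hnodup : js.Nodup := hjs.nodup_iff.mpr ((List.pairwise_map.mpr hl).imp ne_of_lt)
    have hvanish (t : Fin js.length) (ht : t ≠ ⟨t₀, ht₀⟩) :
        ¬ Finsupp.single v (p ^ js[t]) ≤ pairedExponent p e (v :: l) := by
      have hne : js[(t : ℕ)] ≠ e v := by
        rw [← hjt₀, Ne, hnodup.getElem_inj_iff]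
        exact fun h => ht (Fin.ext h)
      have hmem : js[(t : ℕ)] ∈ e v :: l.map e := hjs.subset (List.getElem_mem t.2)
      exact not_single_le_pairedExponent_cons hp hl ((List.mem_cons.mp hmem).resolve_left hne)
    refine ⟨js.length - (t₀ + 1) + k, ?_⟩
    rw [List.cons_append, List.map_cons, List.prod_cons, hQ.list_prod_map_apply_xGen_mul,
      map_add, map_smul, xCoeff_xGen_mul _ (Ne.symm hw.1), smul_zero, add_zero, map_sum,
      Finset.sum_eq_single ⟨t₀, ht₀⟩]
    · rw [map_smul, Fin.getElem_fin, hjt₀, X_pow_eq_monomial, xCoeff_monomial_mul,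
        pairedExponent_cons, if_pos le_self_add, add_tsub_cancel_left, hk, smul_eq_mul, pow_add]
    · intro t _ ht
      rw [map_smul, X_pow_eq_monomial, xCoeff_monomial_mul, if_neg (hvanish t ht), smul_zero]
    · exact fun h => absurd (Finset.mem_univ _) h

theorem xCoeff_ofFn_prod_apply (hp : 1 < p) (hQ : IsMilnorFamily Q) {m : ℕ} (hmn : m + 2 ≤ n)
    (idx : Fin m → ℕ) (hmono : StrictMono idx) (hpos : ∀ i, 0 < idx i) :
    ∃ k : ℕ, xCoeff p ((∑ i : Fin m, Finsupp.single (Fin.castLE (by omega) i) (p ^ idx i)) +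
        Finsupp.single ⟨m, by omega⟩ 1) ⟨m + 1, by omega⟩
      (((List.ofFn fun i : Fin m => Q (idx i)).prod * Q 0)
        (List.ofFn fun i : Fin (m + 2) => xGen (Fin.castLE hmn i)).prod) = (-1) ^ k := by
  set c : Fin n := ⟨m, by omega⟩
  set w : Fin n := ⟨m + 1, by omega⟩
  set vs : List (Fin n) := List.ofFn fun i : Fin m => Fin.castLE (by omega) i
  let e : Fin n → ℕ := fun v => if h : v.val < m then idx ⟨v, h⟩ else 0
  have hec : e c = 0 := by simp [e, c]
  have he : vs.map e = List.ofFn idx := by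
    simp [vs, e, List.map_ofFn, Function.comp_def]
  have hl : (c :: vs).Pairwise (e · < e ·) := by
    rw [List.pairwise_cons, ← List.pairwise_map (R := (· < ·)), he, List.pairwise_ofFn]
    refine ⟨fun v hv => ?_, fun i j hij => hmono hij⟩
    obtain ⟨i, rfl⟩ := List.mem_ofFn.mp hv
    simpa [hec, e] using hpos i
  have hw : w ∉ c :: vs := by
    simp only [List.mem_cons, List.mem_ofFn, vs, w, c, Fin.ext_iff, Fin.val_castLE, not_or,
      not_exists]
    exact ⟨by omega, fun i => by omega⟩
  have hperm : (List.ofFn idx ++ [0]).Perm ((c :: vs).map e) := by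
    rw [List.map_cons, he, hec]
    exact List.perm_append_singleton _ _
  have hops :
      (List.ofFn fun i => Q (idx i)).prod * Q 0 = ((List.ofFn idx ++ [0]).map Q).prod := by
    simp [List.map_ofFn, List.prod_append, Function.comp_def]
  have hxs : (List.ofFn fun i : Fin (m + 2) => (xGen (Fin.castLE hmn i) : PolyTensorExtN p n)) =
      (vs ++ [c, w]).map xGen := by
    rw [List.ofFn_succ', List.ofFn_succ', List.concat_eq_append, List.concat_eq_append,
      List.append_assoc]
    simp only [vs, List.map_append, List.map_ofFn, Function.comp_def, List.map_cons,
      List.map_nil, List.singleton_append]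
    rfl
  have hμ : (∑ i : Fin m, Finsupp.single (Fin.castLE (by omega) i) (p ^ idx i)) +
      Finsupp.single c 1 = pairedExponent p e (c :: vs) := by
    rw [pairedExponent_cons, add_comm, hec, pow_zero]
    simp [pairedExponent, vs, List.map_ofFn, Function.comp_def, List.sum_ofFn, e]
  obtain ⟨k, hk⟩ := hQ.xCoeff_list_prod_map_apply hp e w (c :: vs) hl hw _ hperm
  refine ⟨m + k, ?_⟩
  rw [hμ, hops, hxs, list_prod_map_xGen_append_pair, map_smul, map_smul, List.length_ofFn, hk,
    smul_eq_mul, pow_add]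

end IsMilnorFamily

end MilnorOperation

open MilnorOperation

/-- In `A = F_p[y₁,…,yₙ] ⊗ Λ(x₁,…,xₙ)` with the Milnor operations `Q_j`
(graded derivations with `Q_j xᵢ = yᵢ^{p^j}`, `Q_j yᵢ = 0`), for `2 ≤ s ≤ n` and
`0 < i₁ < ⋯ < i_{s-2}` the element `Q_{i₁} ∘ ⋯ ∘ Q_{i_{s-2}} ∘ Q₀ (x₁⋯x_s)` is
nonzero: its `x_s`-component contains the monomial
`y₁^{p^{i₁}} ⋯ y_{s-2}^{p^{i_{s-2}}} · y_{s-1}` with coefficient `±1`. -/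
theorem milnor_iterated_Q_on_product_ne_zero
    (p n : ℕ) (hp : p.Prime)
    (x y : Fin n → PolyTensorExtN p n)
    (hx : ∀ i, x i = 1 ⊗ₜ ExteriorAlgebra.ι (ZMod p) (Pi.single i (1 : ZMod p)))
    (hy : ∀ i, y i = (MvPolynomial.X i) ⊗ₜ 1)
    (ε : PolyTensorExtN p n →ₐ[ZMod p] PolyTensorExtN p n)
    (hε : ε = Algebra.TensorProduct.map (AlgHom.id (ZMod p) (MvPolynomial (Fin n) (ZMod p)))
        (ExteriorAlgebra.map (-(LinearMap.id (R := ZMod p) (M := Fin n → ZMod p)))))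
    (Q : ℕ → (PolyTensorExtN p n →ₗ[ZMod p] PolyTensorExtN p n))
    (hQx : ∀ j i, Q j (x i) = (y i) ^ (p ^ j))
    (hQy : ∀ j i, Q j (y i) = 0)
    (hQmul : ∀ j, ∀ a b, Q j (a * b) = Q j a * b + ε a * Q j b) :
    ∀ (s : ℕ) (hs2 : 2 ≤ s) (hsn : s ≤ n) (idx : Fin (s - 2) → ℕ),
      StrictMono idx → (∀ k, 0 < idx k) →
      ((List.ofFn (fun k : Fin (s - 2) => Q (idx k))).prod * Q 0)
          ((List.ofFn (fun k : Fin s => x (Fin.castLE hsn k))).prod) ≠ 0 ∧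
      (MvPolynomial.coeff
          ((∑ k : Fin (s - 2),
              Finsupp.single (Fin.castLE (by omega) k : Fin n) (p ^ idx k)) +
            Finsupp.single (⟨s - 2, by omega⟩ : Fin n) 1)
          ((TensorProduct.rid (ZMod p) (MvPolynomial (Fin n) (ZMod p)))
            ((TensorProduct.map LinearMap.id
                (LinearMap.proj (⟨s - 1, by omega⟩ : Fin n)))
              ((TensorProduct.map LinearMap.id ExteriorAlgebra.ιInv)
                (((List.ofFn (fun k : Fin (s - 2) => Q (idx k))).prod * Q 0)
                  ((List.ofFn (fun k : Fin s => x (Fin.castLE hsn k))).prod)))))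
          = 1 ∨
        MvPolynomial.coeff
          ((∑ k : Fin (s - 2),
              Finsupp.single (Fin.castLE (by omega) k : Fin n) (p ^ idx k)) +
            Finsupp.single (⟨s - 2, by omega⟩ : Fin n) 1)
          ((TensorProduct.rid (ZMod p) (MvPolynomial (Fin n) (ZMod p)))
            ((TensorProduct.map LinearMap.id
                (LinearMap.proj (⟨s - 1, by omega⟩ : Fin n)))
              ((TensorProduct.map LinearMap.id ExteriorAlgebra.ιInv)
                (((List.ofFn (fun k : Fin (s - 2) => Q (idx k))).prod * Q 0)
                  ((List.ofFn (fun k : Fin s => x (Fin.castLE hsn k))).prod)))))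
          = -1) := by
  intro s hs2 hsn idx hmono hpos
  obtain ⟨m, rfl⟩ : ∃ m, s = m + 2 := ⟨s - 2, by omega⟩
  obtain rfl : x = xGen := funext hx
  obtain rfl : y = fun i => MvPolynomial.X i ⊗ₜ 1 := funext hy
  subst hε
  have hQ : IsMilnorFamily Q :=
    ⟨fun j i => by rw [hQx, Algebra.TensorProduct.tmul_pow, one_pow], hQy, hQmul⟩
  have : Fact p.Prime := ⟨hp⟩
  obtain ⟨k, hk⟩ := hQ.xCoeff_ofFn_prod_apply hp.one_lt hsn idx hmono hpos
  refine ⟨fun h => ?_, ?_⟩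
  · refine pow_ne_zero k (neg_ne_zero.mpr one_ne_zero : (-1 : ZMod p) ≠ 0) ?_
    exact hk.symm.trans ((congrArg (xCoeff p _ _) h).trans (map_zero _))
  · exact (neg_one_pow_eq_or (ZMod p) k).imp hk.trans hk.trans
end

section
/- Let p be a prime and consider in F_p[y₁, y₂, y₃, y₄] the elements a = y₁^p y₂ − y₁ y₂^p + y₃^p y₄ − y₃ y₄^p and b = y₁^{p²} y₂ − y₁ y₂^{p²} + y₃^{p²} y₄ − y₃ y₄^{p²}. Then (a, b) is a regular sequence in F_p[y₁, y₂, y₃, y₄]. -/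
/-!
Order monomials first by the weight `(p+1, p+2, p+3, 0)` of `(y₁, y₂, y₃, y₄)`, then
lexicographically. The leading monomials are then `y₁y₂ᵖ` for `a` and `y₃^{p²}y₄` for `b`,
which are coprime. Dividing `x` by `a` leaves a remainder `r` none of whose monomials is
divisible by `y₁y₂ᵖ`; if `a ∣ b r` with `r ≠ 0`, comparing leading monomials of `b r = a s`
shows that `y₁y₂ᵖ` divides the leading monomial of `r`, a contradiction.
-/

open MvPolynomial
open Finsupp (single weight)
open scoped MonomialOrder

theorem Finsupp.le_of_le_add_of_disjoint {σ : Type*} {a b c : σ →₀ ℕ} (hab : Disjoint a b)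
    (h : a ≤ b + c) : a ≤ c := by
  intro i
  have hi : a i = 0 ∨ b i = 0 := by
    by_contra! hne
    exact Finset.disjoint_left.mp (Finsupp.disjoint_iff.mp hab)
      (Finsupp.mem_support_iff.mpr hne.1) (Finsupp.mem_support_iff.mpr hne.2)
  have := h i
  simp only [Finsupp.coe_add, Pi.add_apply] at this
  omega

namespace MonomialOrder

section WeightLex

variable {σ : Type*} (w : σ → ℕ)

noncomputable def weightLexEmbedding : (σ →₀ ℕ) →+ Lex (ℕ × Lex (σ →₀ ℕ)) where
  toFun d := toLex (weight w d, toLex d)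
  map_zero' := by simp
  map_add' _ _ := by simp; rfl

theorem weightLexEmbedding_injective : Function.Injective (weightLexEmbedding w) :=
  fun c d h => by simpa [weightLexEmbedding] using congrArg (fun x => (ofLex x).2) h

theorem weightLexEmbedding_monotone [LinearOrder σ] : Monotone (weightLexEmbedding w) := by
  intro c d h
  obtain ⟨e, rfl⟩ := exists_add_of_le h
  exact Prod.Lex.toLex_mono ⟨by simp, Finsupp.toLex_monotone h⟩

variable [LinearOrder σ] [WellFoundedGT σ]

/-- `MonomialOrder` wants an additive equivalence onto an ordered monoid, so the order is
transported to the range of `weightLexEmbedding`. -/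
noncomputable def weightLex : MonomialOrder σ where
  syn := AddMonoidHom.mrange (weightLexEmbedding w)
  addCommMonoidSyn := inferInstance
  linearOrderSyn := inferInstance
  isOrderedAddMonoid_syn := inferInstance
  wellFoundedLT_syn := inferInstance
  toSyn := AddEquiv.ofBijective (weightLexEmbedding w).mrangeRestrict
    ⟨fun _ _ h => weightLexEmbedding_injective w (congrArg Subtype.val h),
      AddMonoidHom.mrangeRestrict_surjective _⟩
  toSyn_monotone := weightLexEmbedding_monotone w

variable {w}

theorem weightLex_lt_of_weight_lt {c d : σ →₀ ℕ} (h : weight w c < weight w d) :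
    c ≺[weightLex w] d :=
  Prod.Lex.toLex_lt_toLex.mpr (Or.inl h)

end WeightLex

variable {σ R : Type*} [CommRing R]

theorem degree_X_pow_mul_X_pow [Nontrivial R] (m : MonomialOrder σ) (i j : σ) (k l : ℕ) :
    m.degree (X i ^ k * X j ^ l : MvPolynomial σ R) = single i k + single j l := by
  classical
  rw [X_pow_eq_monomial, X_pow_eq_monomial, monomial_mul, one_mul, degree_monomial,
    if_neg one_ne_zero]

theorem degree_X_pow_mul_X_sub_X_mul_X_pow [Nontrivial R] [LinearOrder σ] [WellFoundedGT σ]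
    {w : σ → ℕ} {i j : σ} (hw : w i < w j) {r : ℕ} (hr : 2 ≤ r) :
    (weightLex w).degree (X i ^ r * X j - X i * X j ^ r : MvPolynomial σ R)
      = single i 1 + single j r := by
  have hA := (weightLex w).degree_X_pow_mul_X_pow (R := R) i j r 1
  have hB := (weightLex w).degree_X_pow_mul_X_pow (R := R) i j 1 r
  simp only [pow_one] at hA hB
  rw [← neg_sub, degree_neg, degree_sub_of_lt, hB]
  rw [hA, hB]
  apply weightLex_lt_of_weight_lt
  simp only [map_add, Finsupp.weight_single, smul_eq_mul]
  nlinarith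

theorem dvd_of_dvd_mul_of_disjoint_degree [IsDomain R] (m : MonomialOrder σ)
    {f g x : MvPolynomial σ R} (hf : IsUnit (m.leadingCoeff f)) (hg : g ≠ 0)
    (hfg : Disjoint (m.degree f) (m.degree g)) (h : f ∣ g * x) : f ∣ x := by
  obtain ⟨q, r, rfl, -, hr⟩ := m.div_single hf x
  suffices r = 0 by simp [this]
  by_contra hr0
  obtain ⟨s, hs⟩ : f ∣ g * r := by
    rwa [mul_add, ← mul_assoc, dvd_add_right (dvd_mul_left f _)] at h
  have hs0 : s ≠ 0 := by
    rintro rfl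
    exact mul_ne_zero hg hr0 (hs.trans (mul_zero f))
  have hdeg : m.degree g + m.degree r = m.degree f + m.degree s := by
    rw [← m.degree_mul hg hr0, hs, m.degree_mul (m.leadingCoeff_ne_zero_iff.mp hf.ne_zero) hs0]
  exact hr _ (m.degree_mem_support hr0)
    (Finsupp.le_of_le_add_of_disjoint hfg (hdeg ▸ le_self_add))

end MonomialOrder

open MonomialOrder

/-- The weight of `y₃` exceeds that of `y₂` by one and `p < wt y₁ < p²`: this makes `y₁y₂ᵖ`
outweigh `y₃ᵖy₄`, while `y₃^{p²}y₄` outweighs `y₁y₂^{p²}`. -/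
def frobWeight (p : ℕ) : Fin 4 → ℕ := ![p + 1, p + 2, p + 3, 0]

section FrobeniusForms

variable {R : Type*} [CommRing R] [Nontrivial R] {p : ℕ}

theorem degree_frobWeight_X0_X1 {r : ℕ} (hr : 2 ≤ r) :
    (weightLex (frobWeight p)).degree (X 0 ^ r * X 1 - X 0 * X 1 ^ r : MvPolynomial (Fin 4) R)
      = single 0 1 + single 1 r :=
  degree_X_pow_mul_X_sub_X_mul_X_pow (by simp [frobWeight]) hr

theorem degree_frobWeight_X2_X3 {r : ℕ} (hr : 2 ≤ r) :
    (weightLex (frobWeight p)).degree (X 2 ^ r * X 3 - X 2 * X 3 ^ r : MvPolynomial (Fin 4) R)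
      = single 2 r + single 3 1 := by
  rw [show (X 2 ^ r * X 3 - X 2 * X 3 ^ r : MvPolynomial (Fin 4) R)
      = -(X 3 ^ r * X 2 - X 3 * X 2 ^ r) by ring, degree_neg,
    degree_X_pow_mul_X_sub_X_mul_X_pow (by simp [frobWeight]) hr, add_comm]

theorem degree_frobWeight_Q1Q0f (hp : 2 ≤ p) :
    (weightLex (frobWeight p)).degree
      (X 0 ^ p * X 1 - X 0 * X 1 ^ p + X 2 ^ p * X 3 - X 2 * X 3 ^ p : MvPolynomial (Fin 4) R)
      = single 0 1 + single 1 p := by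
  rw [add_sub_assoc, degree_add_of_lt, degree_frobWeight_X0_X1 hp]
  rw [degree_frobWeight_X0_X1 hp, degree_frobWeight_X2_X3 hp]
  apply weightLex_lt_of_weight_lt
  simp only [frobWeight, map_add, Finsupp.weight_single, smul_eq_mul, Matrix.cons_val,
    Matrix.cons_val_zero, Matrix.cons_val_one]
  nlinarith

theorem degree_frobWeight_Q2Q0f (hp : 2 ≤ p) :
    (weightLex (frobWeight p)).degree
      (X 0 ^ (p ^ 2) * X 1 - X 0 * X 1 ^ (p ^ 2) + X 2 ^ (p ^ 2) * X 3 - X 2 * X 3 ^ (p ^ 2) :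
        MvPolynomial (Fin 4) R)
      = single 2 (p ^ 2) + single 3 1 := by
  have hp2 : 2 ≤ p ^ 2 := by nlinarith
  rw [add_sub_assoc, degree_add_eq_right_of_lt, degree_frobWeight_X2_X3 hp2]
  rw [degree_frobWeight_X0_X1 hp2, degree_frobWeight_X2_X3 hp2]
  apply weightLex_lt_of_weight_lt
  simp only [frobWeight, map_add, Finsupp.weight_single, smul_eq_mul, Matrix.cons_val,
    Matrix.cons_val_zero, Matrix.cons_val_one]
  nlinarith

end FrobeniusForms

/-- In `F_p[y₁,y₂,y₃,y₄]`, the pair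
`a = y₁ᵖy₂ − y₁y₂ᵖ + y₃ᵖy₄ − y₃y₄ᵖ`, `b = y₁^{p²}y₂ − y₁y₂^{p²} + y₃^{p²}y₄ − y₃y₄^{p²}`
is a regular sequence: `a` is a nonzerodivisor and `b` is a nonzerodivisor modulo `(a)`. -/
theorem regular_sequence_Q1Q0f_Q2Q0f
    (p : ℕ) (hp : p.Prime)
    (a b : MvPolynomial (Fin 4) (ZMod p))
    (ha : a = X 0 ^ p * X 1 - X 0 * X 1 ^ p + X 2 ^ p * X 3 - X 2 * X 3 ^ p)
    (hb : b = X 0 ^ (p ^ 2) * X 1 - X 0 * X 1 ^ (p ^ 2)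
        + X 2 ^ (p ^ 2) * X 3 - X 2 * X 3 ^ (p ^ 2)) :
    (∀ x : MvPolynomial (Fin 4) (ZMod p), a * x = 0 → x = 0) ∧
    (∀ x : MvPolynomial (Fin 4) (ZMod p),
      b * x ∈ Ideal.span {a} → x ∈ Ideal.span {a}) := by
  have := Fact.mk hp
  set m := weightLex (frobWeight p)
  have hdega : m.degree a = single 0 1 + single 1 p := ha ▸ degree_frobWeight_Q1Q0f hp.two_le
  have hdegb : m.degree b = single 2 (p ^ 2) + single 3 1 :=
    hb ▸ degree_frobWeight_Q2Q0f hp.two_le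
  have ha0 : a ≠ 0 := m.ne_zero_of_degree_ne_zero (by simp [hdega])
  have hb0 : b ≠ 0 := m.ne_zero_of_degree_ne_zero (by simp [hdegb])
  refine ⟨fun x hx => (mul_eq_zero.mp hx).resolve_left ha0, fun x hx => ?_⟩
  rw [Ideal.mem_span_singleton] at hx ⊢
  refine m.dvd_of_dvd_mul_of_disjoint_degree (m.leadingCoeff_ne_zero_iff.mpr ha0).isUnit hb0
    ?_ hx
  rw [hdega, hdegb, Finsupp.disjoint_iff, Finset.disjoint_left]
  intro i
  fin_cases i <;> simp
end
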